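/- 𝒬^fd is a nonempty compact subset of [0,1]^{𝒜×𝒜⁰} endowed with the product topology of pointwise convergence. -/

import Mathlib

open Set

open scoped Classical

variable {Ω : Type*}

/-- A field of sets on `Ω`: contains `univ`, closed under complements and finite unions. -/
def IsSetField (𝒜 : Set (Set Ω)) : Prop :=
  Set.univ ∈ 𝒜 ∧ (∀ A ∈ 𝒜, Aᶜ ∈ 𝒜) ∧ ∀ A ∈ 𝒜, ∀ B ∈ 𝒜, A ∪ B ∈ 𝒜

/-- A finitely additive probability on the field `𝒜`. -/
def IsFAP (𝒜 : Set (Set Ω)) (P : Set Ω → ℝ) : Prop :=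
  (∀ A ∈ 𝒜, 0 ≤ P A ∧ P A ≤ 1) ∧ P Set.univ = 1 ∧
    ∀ A ∈ 𝒜, ∀ B ∈ 𝒜, Disjoint A B → P (A ∪ B) = P A + P B

/-- A partition of `Ω` into nonempty pairwise disjoint pieces. -/
def IsPartition {ι : Type*} (H : ι → Set Ω) : Prop :=
  (∀ i, (H i).Nonempty) ∧ (Pairwise fun i j => Disjoint (H i) (H j)) ∧
    (⋃ i, H i) = Set.univ

/-- A field containing every member of the partition `H` and whose members are
unions of members of the partition. -/
def IsFieldOver {ι : Type*} (H : ι → Set Ω) (𝒜L : Set (Set Ω)) : Prop :=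
  IsSetField 𝒜L ∧ (∀ i, H i ∈ 𝒜L) ∧ ∀ A ∈ 𝒜L, ∃ S : Set ι, A = ⋃ i ∈ S, H i

/-- A field containing `𝒜L ∪ 𝒜E` whose members are unions of the atoms `H i ∩ E j`. -/
def IsJointField {ι κ : Type*} (H : ι → Set Ω) (E : κ → Set Ω)
    (𝒜L 𝒜E 𝒜 : Set (Set Ω)) : Prop :=
  IsSetField 𝒜 ∧ 𝒜L ⊆ 𝒜 ∧ 𝒜E ⊆ 𝒜 ∧
    ∀ A ∈ 𝒜, ∃ S : Set (ι × κ), A = ⋃ p ∈ S, H p.1 ∩ E p.2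

/-- A strategy on `𝒜 × ℒ`: each `σ (·|H i)` is a finitely additive probability on `𝒜`
equal to `1` on events implied by `H i`. -/
def IsStrategy {ι : Type*} (𝒜 : Set (Set Ω)) (H : ι → Set Ω) (σ : Set Ω → ι → ℝ) : Prop :=
  ∀ i, IsFAP 𝒜 (fun F => σ F i) ∧ ∀ F ∈ 𝒜, H i ⊆ F → σ F i = 1

/-- A full conditional probability on the field `𝒜` (conditions (C1), (C2), (C3)). -/
def IsFCP (𝒜 : Set (Set Ω)) (P : Set Ω → Set Ω → ℝ) : Prop :=
  (∀ E ∈ 𝒜, ∀ K ∈ 𝒜, K.Nonempty → P E K = P (E ∩ K) K) ∧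
  (∀ K ∈ 𝒜, K.Nonempty → IsFAP 𝒜 fun E => P E K) ∧
  ∀ E ∈ 𝒜, ∀ F ∈ 𝒜, ∀ K ∈ 𝒜, K.Nonempty → (E ∩ K).Nonempty →
    P (E ∩ F) K = P E K * P F (E ∩ K)

/-- `P` extends the prior `π` on `𝒜L` and the strategy `σ` on `𝒜 × ℒ`. -/
def ExtendsPriorStrategy {ι : Type*} (𝒜 𝒜L : Set (Set Ω)) (H : ι → Set Ω)
    (π : Set Ω → ℝ) (σ : Set Ω → ι → ℝ) (P : Set Ω → Set Ω → ℝ) : Prop :=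
  (∀ B ∈ 𝒜L, P B Set.univ = π B) ∧ ∀ F ∈ 𝒜, ∀ i, P F (H i) = σ F i

/-- The set `𝒫` of full conditional probabilities on `𝒜` extending `{π, σ}`. -/
def FCPSet {ι : Type*} (𝒜 𝒜L : Set (Set Ω)) (H : ι → Set Ω)
    (π : Set Ω → ℝ) (σ : Set Ω → ι → ℝ) : Set (Set Ω → Set Ω → ℝ) :=
  {P | IsFCP 𝒜 P ∧ ExtendsPriorStrategy 𝒜 𝒜L H π σ P}

/-- Lower envelope of a set of conditional probabilities at `F|K`. -/
noncomputable def lowEnv (Ps : Set (Set Ω → Set Ω → ℝ)) (F K : Set Ω) : ℝ :=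
  sInf ((fun P => P F K) '' Ps)

/-- Upper envelope of a set of conditional probabilities at `F|K`. -/
noncomputable def upEnv (Ps : Set (Set Ω → Set Ω → ℝ)) (F K : Set Ω) : ℝ :=
  sSup ((fun P => P F K) '' Ps)

/-- A finite partition of `Ω` contained in `𝒜L`. -/
def IsFinPart (𝒜L : Set (Set Ω)) (T : Finset (Set Ω)) : Prop :=
  (↑T : Set (Set Ω)) ⊆ 𝒜L ∧ (∀ A ∈ T, (A : Set Ω).Nonempty) ∧
    (∀ A ∈ T, ∀ B ∈ T, A ≠ B → Disjoint A B) ∧ ⋃₀ (↑T : Set (Set Ω)) = Set.univ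

/-- Lower Stieltjes integral of `X : ℒ → ℝ` with respect to `μ` on `𝒜L`. -/
noncomputable def lowerSInt {ι : Type*} (H : ι → Set Ω) (𝒜L : Set (Set Ω))
    (X : ι → ℝ) (μ : Set Ω → ℝ) : ℝ :=
  sSup {x | ∃ T : Finset (Set Ω), IsFinPart 𝒜L T ∧
    x = ∑ A ∈ T, sInf {y | ∃ i, H i ⊆ A ∧ y = X i} * μ A}

/-- Upper Stieltjes integral of `X : ℒ → ℝ` with respect to `μ` on `𝒜L`. -/
noncomputable def upperSInt {ι : Type*} (H : ι → Set Ω) (𝒜L : Set (Set Ω))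
    (X : ι → ℝ) (μ : Set Ω → ℝ) : ℝ :=
  sInf {x | ∃ T : Finset (Set Ω), IsFinPart 𝒜L T ∧
    x = ∑ A ∈ T, sSup {y | ∃ i, H i ⊆ A ∧ y = X i} * μ A}

/-- `𝒜L`-continuity of a bounded function `X : ℒ → ℝ`. -/
def ALContinuous {ι : Type*} (H : ι → Set Ω) (𝒜L : Set (Set Ω)) (X : ι → ℝ) : Prop :=
  (∃ M : ℝ, ∀ i, |X i| ≤ M) ∧ ∀ t : ℝ, ∀ ε > (0 : ℝ), ∃ A ∈ 𝒜L,
    (⋃ i ∈ {i | t + ε ≤ X i}, H i) ⊆ A ∧ A ⊆ ⋃ i ∈ {i | t ≤ X i}, H i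

/-- Countable additivity of `P` on the field `𝒜`. -/
def CountablyAdditiveOn (𝒜 : Set (Set Ω)) (P : Set Ω → ℝ) : Prop :=
  ∀ A : ℕ → Set Ω, (∀ n, A n ∈ 𝒜) → (Pairwise fun m n => Disjoint (A m) (A n)) →
    (⋃ n, A n) ∈ 𝒜 → HasSum (fun n => P (A n)) (P (⋃ n, A n))

/-- A (normalized) capacity on the field `𝒜`. -/
def IsCapacity (𝒜 : Set (Set Ω)) (φ : Set Ω → ℝ) : Prop :=
  φ ∅ = 0 ∧ φ Set.univ = 1 ∧ (∀ A ∈ 𝒜, 0 ≤ φ A ∧ φ A ≤ 1) ∧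
    ∀ A ∈ 𝒜, ∀ B ∈ 𝒜, A ⊆ B → φ A ≤ φ B

/-- Total monotonicity of a capacity `φ` on the field `𝒜`. -/
def TotallyMonotone (𝒜 : Set (Set Ω)) (φ : Set Ω → ℝ) : Prop :=
  ∀ n : ℕ, 2 ≤ n → ∀ A : Fin n → Set Ω, (∀ i, A i ∈ 𝒜) →
    ∑ s ∈ Finset.univ.powerset.filter (fun s : Finset (Fin n) => s.Nonempty),
      (-1 : ℝ) ^ (s.card - 1) * φ (⋂ i ∈ s, A i) ≤ φ (⋃ i, A i)

/-- Restriction of a conditional probability to the domain `𝒜 × ℬ⁰`, viewed as a point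
of the product space `ℝ^(𝒜 × ℬ⁰)`. -/
def restrictPairs (𝒜 ℬ : Set (Set Ω)) (Q : Set Ω → Set Ω → ℝ)
    (p : {p : Set Ω × Set Ω // p.1 ∈ 𝒜 ∧ p.2 ∈ ℬ ∧ p.2.Nonempty}) : ℝ :=
  Q p.val.1 p.val.2

/-- Restriction of a set function to the domain `𝒜`, viewed as a point of `ℝ^𝒜`. -/
def restrictDom (𝒜 : Set (Set Ω)) (μ : Set Ω → ℝ) (A : {A : Set Ω // A ∈ 𝒜}) : ℝ :=
  μ A.val

/-- The field of all unions of members of the partition `H`, i.e. `⟨ℒ⟩*`. -/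
def unionsOf {ι : Type*} (H : ι → Set Ω) : Set (Set Ω) :=
  {A | ∃ S : Set ι, A = ⋃ i ∈ S, H i}

/-- The set `𝒬^fd` of fully ℒ-disintegrable full conditional probabilities on `𝒜`
extending `{π, σ}`. -/
def QfdSet {ι : Type*} (𝒜 𝒜L : Set (Set Ω)) (H : ι → Set Ω)
    (π : Set Ω → ℝ) (σ : Set Ω → ι → ℝ) : Set (Set Ω → Set Ω → ℝ) :=
  {Q | IsFCP 𝒜 Q ∧ ExtendsPriorStrategy 𝒜 𝒜L H π σ Q ∧
    ∀ F ∈ 𝒜, ∀ K ∈ 𝒜L, K.Nonempty →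
      Q F K = lowerSInt H 𝒜L (fun i => σ F i) fun B => Q B K}

/-- The set `𝒬^fsc` of fully strongly ℒ-conglomerable full conditional probabilities
on `𝒜` extending `{π, σ}`. -/
def QfscSet {ι : Type*} (𝒜 𝒜L : Set (Set Ω)) (H : ι → Set Ω)
    (π : Set Ω → ℝ) (σ : Set Ω → ι → ℝ) : Set (Set Ω → Set Ω → ℝ) :=
  {Q | IsFCP 𝒜 Q ∧ ExtendsPriorStrategy 𝒜 𝒜L H π σ Q ∧
    ∀ F ∈ 𝒜, ∀ K ∈ 𝒜L, K.Nonempty → ∀ B ∈ 𝒜L, B.Nonempty → B ⊆ K →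
      Q B K * sInf {x | ∃ i, H i ⊆ B ∧ x = σ F i} ≤ Q (F ∩ B) K ∧
      Q (F ∩ B) K ≤ Q B K * sSup {x | ∃ i, H i ⊆ B ∧ x = σ F i}}

/-- The set `𝒫^sc` of strongly ℒ-conglomerable joint probabilities consistent with `{π, σ}`. -/
def PscSet {ι : Type*} (𝒜 𝒜L : Set (Set Ω)) (H : ι → Set Ω)
    (π : Set Ω → ℝ) (σ : Set Ω → ι → ℝ) : Set (Set Ω → ℝ) :=
  {μ | (∃ P ∈ FCPSet 𝒜 𝒜L H π σ, μ = fun F => P F Set.univ) ∧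
    ∀ F ∈ 𝒜, ∀ B ∈ 𝒜L, B.Nonempty →
      π B * sInf {x | ∃ i, H i ⊆ B ∧ x = σ F i} ≤ μ (F ∩ B) ∧
      μ (F ∩ B) ≤ π B * sSup {x | ∃ i, H i ⊆ B ∧ x = σ F i}}

/-- The set `𝒫^fd` of fully ℒ-disintegrable conditional probabilities on `𝒜 × 𝒜L⁰`
extending `{π, σ}`. -/
def PfdSet {ι : Type*} (𝒜 𝒜L : Set (Set Ω)) (H : ι → Set Ω)
    (π : Set Ω → ℝ) (σ : Set Ω → ι → ℝ) : Set (Set Ω → Set Ω → ℝ) :=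
  {P | (∀ E ∈ 𝒜, ∀ K ∈ 𝒜L, K.Nonempty → P E K = P (E ∩ K) K) ∧
    (∀ K ∈ 𝒜L, K.Nonempty → IsFAP 𝒜 fun E => P E K) ∧
    (∀ E ∈ 𝒜, ∀ F ∈ 𝒜, ∀ K ∈ 𝒜L, K.Nonempty → E ∩ K ∈ 𝒜L → (E ∩ K).Nonempty →
      P (E ∩ F) K = P E K * P F (E ∩ K)) ∧
    (∀ B ∈ 𝒜L, P B Set.univ = π B) ∧ (∀ F ∈ 𝒜, ∀ i, P F (H i) = σ F i) ∧
    ∀ F ∈ 𝒜, ∀ K ∈ 𝒜L, K.Nonempty →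
      P F K = lowerSInt H 𝒜L (fun i => σ F i) fun B => P B K}

/-- The Choquet integral `C∫ X dφ = ∫₀¹ φ₊((X ≥ t)) dt` of a `[0,1]`-valued `X : ℒ → ℝ`
with respect to a capacity `φ` on `𝒜L`, where `φ₊` is the inner extension of `φ`. -/
noncomputable def choquetInt {ι : Type*} (H : ι → Set Ω) (𝒜L : Set (Set Ω))
    (X : ι → ℝ) (φ : Set Ω → ℝ) : ℝ :=
  ∫ t in (0 : ℝ)..(1 : ℝ),
    sSup {y | ∃ B ∈ 𝒜L, B ⊆ (⋃ i ∈ {i | t ≤ X i}, H i) ∧ y = φ B}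


/-!
Compactness. A point of `[0,1]^(𝒜 × 𝒜⁰)` lies in the image iff its extension by zero is a full
conditional probability extending `{π, σ}` that is disintegrable. All these conditions are closed
except disintegrability; but `𝒜L`-continuity makes every `σ(F|·)` S-integrable (on a fine enough
partition its lower and upper Stieltjes sums are `ε`-close), so `Q(F|K) = ∫ σ(F|·) dQ(·|K)` is
equivalent to the closed condition that `Q(F|K)` lies between all lower and all upper sums.

Nonemptiness. The joint probability `ν_π = ∫ σ(·|H) dπ` is finitely additive (the integral is
additive on `𝒜L`-continuous integrands) and extends `π`. Condition on `K` with the first member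
charging `K` of the well-ordered family `ν_π`, then `σ(·|H i)` (`i` well-ordered), then the Dirac
masses `δ_ω` (`ω` well-ordered); such lexicographic conditioning always yields a full conditional
probability. It extends `σ` since among the strategies only `σ(·|H i)` charges `H i`, and it is
disintegrable since on `K ∈ 𝒜L` it is either `ν_π(·|K)` or `σ(·|H i₀)` for the first atom
`H i₀ ⊆ K`.
-/

section

open MeasureTheory

variable {ι : Type*}

theorem IsSetField.isSetAlgebra {𝒜 : Set (Set Ω)} (h : IsSetField 𝒜) : IsSetAlgebra 𝒜 where
  empty_mem := by simpa using h.2.1 _ h.1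
  compl_mem s hs := h.2.1 s hs
  union_mem s t hs ht := h.2.2 s hs t ht

namespace IsFAP

variable {𝒜 𝒜' : Set (Set Ω)} {μ : Set Ω → ℝ} {A B K : Set Ω}

theorem nonneg (hμ : IsFAP 𝒜 μ) (hA : A ∈ 𝒜) : 0 ≤ μ A := (hμ.1 A hA).1

theorem union (hμ : IsFAP 𝒜 μ) (hA : A ∈ 𝒜) (hB : B ∈ 𝒜) (hAB : Disjoint A B) :
    μ (A ∪ B) = μ A + μ B :=
  hμ.2.2 A hA B hB hAB

theorem congr {ν : Set Ω → ℝ} (hμ : IsFAP 𝒜 μ) (h : ∀ A ∈ 𝒜, ν A = μ A)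
    (huniv : Set.univ ∈ 𝒜) (hunion : ∀ A ∈ 𝒜, ∀ B ∈ 𝒜, A ∪ B ∈ 𝒜) : IsFAP 𝒜 ν := by
  refine ⟨fun A hA => h A hA ▸ hμ.1 A hA, h _ huniv ▸ hμ.2.1, fun A hA B hB hAB => ?_⟩
  rw [h _ (hunion A hA B hB), h A hA, h B hB]
  exact hμ.union hA hB hAB

theorem of_subset (hμ : IsFAP 𝒜' μ) (h : 𝒜 ⊆ 𝒜') : IsFAP 𝒜 μ :=
  ⟨fun A hA => hμ.1 A (h hA), hμ.2.1, fun A hA B hB => hμ.2.2 A (h hA) B (h hB)⟩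

variable (h𝒜 : IsSetField 𝒜) (hμ : IsFAP 𝒜 μ)
include h𝒜 hμ

theorem empty : μ ∅ = 0 := by
  have := hμ.union h𝒜.isSetAlgebra.univ_mem h𝒜.isSetAlgebra.empty_mem (disjoint_bot_right)
  simpa using this

theorem mono (hA : A ∈ 𝒜) (hB : B ∈ 𝒜) (hAB : A ⊆ B) : μ A ≤ μ B := by
  have hBA := h𝒜.isSetAlgebra.sdiff_mem hB hA
  have := hμ.union hA hBA disjoint_sdiff_right
  rw [union_sdiff_cancel hAB] at this
  linarith [hμ.nonneg hBA]

theorem eq_zero_of_subset (hA : A ∈ 𝒜) (hB : B ∈ 𝒜) (hAB : A ⊆ B) (hB0 : μ B = 0) :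
    μ A = 0 :=
  le_antisymm (hB0 ▸ mono h𝒜 hμ hA hB hAB) (hμ.nonneg hA)

theorem compl (hA : A ∈ 𝒜) : μ Aᶜ = 1 - μ A := by
  have := hμ.union hA (h𝒜.isSetAlgebra.compl_mem hA) disjoint_compl_right
  rw [union_compl_self, hμ.2.1] at this
  linarith

theorem cond (hK : K ∈ 𝒜) (hμK : μ K ≠ 0) : IsFAP 𝒜 fun B => μ (B ∩ K) / μ K := by
  have hKpos : 0 < μ K := (hμ.nonneg hK).lt_of_ne' hμK
  refine ⟨fun A hA => ?_, by simp [hμK], fun A hA B hB hAB => ?_⟩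
  · have hAK := h𝒜.isSetAlgebra.inter_mem hA hK
    exact ⟨div_nonneg (hμ.nonneg hAK) hKpos.le,
      (div_le_one hKpos).2 (mono h𝒜 hμ hAK hK inter_subset_right)⟩
  · dsimp only
    rw [union_inter_distrib_right, hμ.union (h𝒜.isSetAlgebra.inter_mem hA hK)
      (h𝒜.isSetAlgebra.inter_mem hB hK) (hAB.mono inter_subset_left inter_subset_left),
      add_div]

theorem sum_inter (hA : A ∈ 𝒜) (T : Finset (Set Ω)) (hT : (↑T : Set (Set Ω)) ⊆ 𝒜)
    (hdisj : (↑T : Set (Set Ω)).PairwiseDisjoint id) :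
    μ (A ∩ ⋃₀ ↑T) = ∑ B ∈ T, μ (A ∩ B) := by
  induction T using Finset.induction_on with
  | empty => simpa using empty h𝒜 hμ
  | @insert B T hBT ih =>
    rw [Finset.coe_insert] at hT hdisj
    have hU : ⋃₀ (↑T : Set (Set Ω)) ∈ 𝒜 :=
      sUnion_eq_biUnion ▸ h𝒜.isSetAlgebra.biUnion_mem T fun C hC => hT (Or.inr hC)
    have hd : Disjoint (A ∩ B) (A ∩ ⋃₀ ↑T) := by
      refine (disjoint_sUnion_right.2 fun C hC => ?_).mono inter_subset_right inter_subset_right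
      exact hdisj (Or.inl rfl) (Or.inr hC) (ne_of_mem_of_not_mem hC hBT).symm
    rw [Finset.coe_insert, sUnion_insert, inter_union_distrib_left,
      hμ.union (h𝒜.isSetAlgebra.inter_mem hA (hT (Or.inl rfl)))
        (h𝒜.isSetAlgebra.inter_mem hA hU) hd,
      Finset.sum_insert hBT, ih (fun C hC => hT (Or.inr hC)) (hdisj.subset (subset_insert _ _))]

end IsFAP

theorem isFAP_dirac (𝒜 : Set (Set Ω)) (ω : Ω) :
    IsFAP 𝒜 fun E => if ω ∈ E then 1 else 0 := by
  refine ⟨fun A _ => by dsimp only; split_ifs <;> norm_num, by simp, fun A _ B _ hAB => ?_⟩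
  by_cases hA : ω ∈ A
  · simp [hA, disjoint_left.1 hAB hA]
  · by_cases hB : ω ∈ B <;> simp [hA, hB]

namespace IsPartition

variable {H : ι → Set Ω} (hH : IsPartition H)
include hH

theorem eq_of_mem {i j : ι} {ω : Ω} (hi : ω ∈ H i) (hj : ω ∈ H j) : i = j := by
  by_contra hne
  exact disjoint_left.1 (hH.2.1 hne) hi hj

theorem eq_of_subset {i j : ι} (h : H i ⊆ H j) : i = j :=
  let ⟨_, hω⟩ := hH.1 i
  hH.eq_of_mem hω (h hω)

theorem exists_mem (ω : Ω) : ∃ i, ω ∈ H i :=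
  mem_iUnion.1 (hH.2.2.symm ▸ mem_univ ω)

theorem not_subset_of_subset_compl {A : Set Ω} {i : ι} (h : H i ⊆ Aᶜ) : ¬H i ⊆ A :=
  fun h' => let ⟨_, hω⟩ := hH.1 i; h hω (h' hω)

variable {𝒜L : Set (Set Ω)} (h𝒜L : IsFieldOver H 𝒜L)
include h𝒜L

theorem subset_compl_of_not_subset {A : Set Ω} (hA : A ∈ 𝒜L) {i : ι} (hi : ¬H i ⊆ A) :
    H i ⊆ Aᶜ := by
  obtain ⟨S, rfl⟩ := h𝒜L.2.2 A hA
  have hiS : i ∉ S := fun h => hi (subset_biUnion_of_mem h)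
  intro ω hωi hω
  obtain ⟨j, hjS, hωj⟩ := mem_iUnion₂.1 hω
  exact hiS (hH.eq_of_mem hωi hωj ▸ hjS)

theorem exists_subset {A : Set Ω} (hA : A ∈ 𝒜L) (hne : A.Nonempty) : ∃ i, H i ⊆ A := by
  obtain ⟨ω, hω⟩ := hne
  obtain ⟨i, hi⟩ := hH.exists_mem ω
  by_contra! h
  exact hH.subset_compl_of_not_subset h𝒜L hA (h i) hi hω

end IsPartition

section FinitePartitions

variable {𝒜L : Set (Set Ω)} {T T' R R' : Finset (Set Ω)}

theorem isFinPart_filter_nonempty (hT : (↑T : Set (Set Ω)) ⊆ 𝒜L)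
    (hdisj : ∀ A ∈ T, ∀ B ∈ T, A ≠ B → Disjoint A B) (hcover : ⋃₀ (↑T : Set (Set Ω)) = univ) :
    IsFinPart 𝒜L (T.filter Set.Nonempty) := by
  refine ⟨fun A hA => hT (Finset.mem_filter.1 hA).1, fun A hA => (Finset.mem_filter.1 hA).2,
    fun A hA B hB => hdisj A (Finset.mem_filter.1 hA).1 B (Finset.mem_filter.1 hB).1, ?_⟩
  refine eq_univ_of_forall fun ω => ?_
  obtain ⟨A, hA, hωA⟩ := mem_sUnion.1 (hcover.symm ▸ mem_univ ω)
  exact mem_sUnion.2 ⟨A, Finset.mem_filter.2 ⟨hA, ω, hωA⟩, hωA⟩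

theorem IsFinPart.univ [Nonempty Ω] (h𝒜L : IsSetField 𝒜L) : IsFinPart 𝒜L {univ} :=
  ⟨by simpa using h𝒜L.1, by simp, by simp, by simp⟩

noncomputable def commonRefinement (T T' : Finset (Set Ω)) : Finset (Set Ω) :=
  ((T ×ˢ T').image fun p => p.1 ∩ p.2).filter Set.Nonempty

theorem mem_commonRefinement {C : Set Ω} :
    C ∈ commonRefinement T T' ↔ (∃ A ∈ T, ∃ B ∈ T', A ∩ B = C) ∧ C.Nonempty := by
  simp [commonRefinement, and_assoc]

theorem IsFinPart.commonRefinement (h𝒜L : IsSetField 𝒜L) (hT : IsFinPart 𝒜L T)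
    (hT' : IsFinPart 𝒜L T') : IsFinPart 𝒜L (commonRefinement T T') := by
  refine isFinPart_filter_nonempty ?_ ?_ ?_
  · simp only [Finset.coe_image, image_subset_iff]
    rintro ⟨A, B⟩ hAB
    rw [Finset.coe_product, mem_prod] at hAB
    exact h𝒜L.isSetAlgebra.inter_mem (hT.1 hAB.1) (hT'.1 hAB.2)
  · simp only [Finset.mem_image, Finset.mem_product]
    rintro _ ⟨⟨A, B⟩, ⟨hA, hB⟩, rfl⟩ _ ⟨⟨A', B'⟩, ⟨hA', hB'⟩, rfl⟩ hne
    by_cases hAA' : A = A'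
    · subst hAA'
      have hBB' : B ≠ B' := by rintro rfl; exact hne rfl
      exact (hT'.2.2.1 B hB B' hB' hBB').mono inter_subset_right inter_subset_right
    · exact (hT.2.2.1 A hA A' hA' hAA').mono inter_subset_left inter_subset_left
  · refine eq_univ_of_forall fun ω => ?_
    obtain ⟨A, hA, hωA⟩ := mem_sUnion.1 (hT.2.2.2.symm ▸ mem_univ ω)
    obtain ⟨B, hB, hωB⟩ := mem_sUnion.1 (hT'.2.2.2.symm ▸ mem_univ ω)
    exact mem_sUnion.2 ⟨A ∩ B, Finset.mem_image.2 ⟨(A, B), Finset.mem_product.2 ⟨hA, hB⟩, rfl⟩,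
      hωA, hωB⟩

noncomputable def pairPart (B : Set Ω) : Finset (Set Ω) :=
  ({B, Bᶜ} : Finset (Set Ω)).filter Set.Nonempty

theorem isFinPart_pairPart (h𝒜L : IsSetField 𝒜L) {B : Set Ω} (hB : B ∈ 𝒜L) :
    IsFinPart 𝒜L (pairPart B) := by
  refine isFinPart_filter_nonempty ?_ ?_ (by simp)
  · simpa [insert_subset_iff] using ⟨hB, h𝒜L.isSetAlgebra.compl_mem hB⟩
  · simp only [Finset.mem_insert, Finset.mem_singleton]
    rintro A (rfl | rfl) B' (rfl | rfl) hne <;>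
      first | exact absurd rfl hne | exact disjoint_compl_right | exact disjoint_compl_left

def Refines (R T : Finset (Set Ω)) : Prop := ∀ C ∈ R, ∃ A ∈ T, C ⊆ A

theorem Refines.trans (h : Refines R' R) (h' : Refines R T) : Refines R' T := fun C hC =>
  let ⟨B, hB, hCB⟩ := h C hC
  let ⟨A, hA, hBA⟩ := h' B hB
  ⟨A, hA, hCB.trans hBA⟩

theorem refines_commonRefinement_left : Refines (commonRefinement T T') T := fun _ hC =>
  let ⟨⟨A, hA, _, _, hAB⟩, _⟩ := mem_commonRefinement.1 hC
  ⟨A, hA, hAB ▸ inter_subset_left⟩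

theorem refines_commonRefinement_right : Refines (commonRefinement T T') T' := fun _ hC =>
  let ⟨⟨_, _, B, hB, hAB⟩, _⟩ := mem_commonRefinement.1 hC
  ⟨B, hB, hAB ▸ inter_subset_right⟩

theorem Refines.subset_or_subset_compl {K C : Set Ω} (h : Refines R {K, Kᶜ}) (hC : C ∈ R) :
    C ⊆ K ∨ C ⊆ Kᶜ := by
  simpa using h C hC

theorem refines_pairPart {K : Set Ω} : Refines (pairPart K) {K, Kᶜ} := fun C hC =>
  ⟨C, (Finset.mem_filter.1 hC).1, subset_rfl⟩

theorem exists_finPart_refines_forall_pair (h𝒜L : IsSetField 𝒜L) (hT : IsFinPart 𝒜L T)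
    (𝒢 : Finset (Set Ω)) (h𝒢 : (↑𝒢 : Set (Set Ω)) ⊆ 𝒜L) :
    ∃ R, IsFinPart 𝒜L R ∧ Refines R T ∧ ∀ K ∈ 𝒢, Refines R {K, Kᶜ} := by
  induction 𝒢 using Finset.induction_on with
  | empty => exact ⟨T, hT, fun C hC => ⟨C, hC, subset_rfl⟩, by simp⟩
  | @insert K 𝒢 _ ih =>
    rw [Finset.coe_insert, insert_subset_iff] at h𝒢
    obtain ⟨R, hR, hRT, hR𝒢⟩ := ih h𝒢.2
    refine ⟨commonRefinement R (pairPart K),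
      hR.commonRefinement h𝒜L (isFinPart_pairPart h𝒜L h𝒢.1),
      refines_commonRefinement_left.trans hRT, ?_⟩
    simp only [Finset.mem_insert, forall_eq_or_imp]
    exact ⟨refines_commonRefinement_right.trans refines_pairPart,
      fun K' hK' => refines_commonRefinement_left.trans (hR𝒢 K' hK')⟩

end FinitePartitions

section StieltjesSums

variable {H : ι → Set Ω} {𝒜L : Set (Set Ω)} {X : ι → ℝ} {μ : Set Ω → ℝ} {M c : ℝ}
  {A C : Set Ω} {T T' R : Finset (Set Ω)}

noncomputable def infOn (H : ι → Set Ω) (X : ι → ℝ) (A : Set Ω) : ℝ :=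
  sInf {y | ∃ i, H i ⊆ A ∧ y = X i}

noncomputable def supOn (H : ι → Set Ω) (X : ι → ℝ) (A : Set Ω) : ℝ :=
  sSup {y | ∃ i, H i ⊆ A ∧ y = X i}

noncomputable def lowSum (H : ι → Set Ω) (X : ι → ℝ) (μ : Set Ω → ℝ) (T : Finset (Set Ω)) :
    ℝ :=
  ∑ A ∈ T, infOn H X A * μ A

noncomputable def upSum (H : ι → Set Ω) (X : ι → ℝ) (μ : Set Ω → ℝ) (T : Finset (Set Ω)) :
    ℝ :=
  ∑ A ∈ T, supOn H X A * μ A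

theorem lowerSInt_eq_sSup :
    lowerSInt H 𝒜L X μ = sSup {x | ∃ T, IsFinPart 𝒜L T ∧ x = lowSum H X μ T} :=
  rfl

theorem infOn_le (hM : ∀ i, |X i| ≤ M) {i : ι} (hi : H i ⊆ A) : infOn H X A ≤ X i :=
  csInf_le ⟨-M, by rintro _ ⟨j, -, rfl⟩; exact neg_le_of_abs_le (hM j)⟩ ⟨i, hi, rfl⟩

theorem le_supOn (hM : ∀ i, |X i| ≤ M) {i : ι} (hi : H i ⊆ A) : X i ≤ supOn H X A :=
  le_csSup ⟨M, by rintro _ ⟨j, -, rfl⟩; exact le_of_abs_le (hM j)⟩ ⟨i, hi, rfl⟩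

theorem le_infOn (hA : ∃ i, H i ⊆ A) (h : ∀ i, H i ⊆ A → c ≤ X i) : c ≤ infOn H X A :=
  le_csInf (let ⟨i, hi⟩ := hA; ⟨X i, i, hi, rfl⟩) (by rintro _ ⟨i, hi, rfl⟩; exact h i hi)

theorem supOn_le (hA : ∃ i, H i ⊆ A) (h : ∀ i, H i ⊆ A → X i ≤ c) : supOn H X A ≤ c :=
  csSup_le (let ⟨i, hi⟩ := hA; ⟨X i, i, hi, rfl⟩) (by rintro _ ⟨i, hi, rfl⟩; exact h i hi)

theorem infOn_eq (hA : ∃ i, H i ⊆ A) (h : ∀ i, H i ⊆ A → X i = c) : infOn H X A = c := by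
  have : {y | ∃ i, H i ⊆ A ∧ y = X i} = {c} := by
    refine eq_singleton_iff_unique_mem.2 ⟨?_, by rintro _ ⟨i, hi, rfl⟩; exact h i hi⟩
    obtain ⟨i, hi⟩ := hA
    exact ⟨i, hi, (h i hi).symm⟩
  rw [infOn, this, csInf_singleton]

theorem supOn_eq (hA : ∃ i, H i ⊆ A) (h : ∀ i, H i ⊆ A → X i = c) : supOn H X A = c := by
  have : {y | ∃ i, H i ⊆ A ∧ y = X i} = {c} := by
    refine eq_singleton_iff_unique_mem.2 ⟨?_, by rintro _ ⟨i, hi, rfl⟩; exact h i hi⟩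
    obtain ⟨i, hi⟩ := hA
    exact ⟨i, hi, (h i hi).symm⟩
  rw [supOn, this, csSup_singleton]

theorem IsFinPart.sum_inter (h𝒜L : IsSetField 𝒜L) (hμ : IsFAP 𝒜L μ) (hT : IsFinPart 𝒜L T)
    (hA : A ∈ 𝒜L) : ∑ C ∈ T, μ (A ∩ C) = μ A := by
  rw [← hμ.sum_inter h𝒜L hA T hT.1 hT.2.2.1, hT.2.2.2, inter_univ]

theorem IsFinPart.sum_eq_one (h𝒜L : IsSetField 𝒜L) (hμ : IsFAP 𝒜L μ) (hT : IsFinPart 𝒜L T) :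
    ∑ C ∈ T, μ C = 1 := by
  simpa [hμ.2.1] using hT.sum_inter h𝒜L hμ h𝒜L.isSetAlgebra.univ_mem

theorem sum_mul_eq_of_refines (h𝒜L : IsSetField 𝒜L) (hμ : IsFAP 𝒜L μ) (hT : IsFinPart 𝒜L T)
    (hR : IsFinPart 𝒜L R) (f : Set Ω → ℝ) {p : Set Ω → Set Ω}
    (hp : ∀ C ∈ R, p C ∈ T ∧ C ⊆ p C) :
    ∑ A ∈ T, f A * μ A = ∑ C ∈ R, f (p C) * μ C := by
  calc ∑ A ∈ T, f A * μ A = ∑ A ∈ T, ∑ C ∈ R, f A * μ (A ∩ C) := by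
        refine Finset.sum_congr rfl fun A hA => ?_
        rw [← Finset.mul_sum, hR.sum_inter h𝒜L hμ (hT.1 hA)]
    _ = ∑ C ∈ R, ∑ A ∈ T, f A * μ (A ∩ C) := Finset.sum_comm
    _ = ∑ C ∈ R, f (p C) * μ C := Finset.sum_congr rfl fun C hC => by
        rw [Finset.sum_eq_single_of_mem _ (hp C hC).1, inter_eq_right.2 (hp C hC).2]
        intro A hA hAp
        have : A ∩ C = ∅ := disjoint_iff_inter_eq_empty.1 <|
          (hT.2.2.1 A hA _ (hp C hC).1 hAp).mono_right (hp C hC).2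
        rw [this, hμ.empty h𝒜L, mul_zero]

theorem Refines.exists_parent (h : Refines R T) :
    ∃ p : Set Ω → Set Ω, ∀ C ∈ R, p C ∈ T ∧ C ⊆ p C :=
  ⟨fun C => if hC : C ∈ R then (h C hC).choose else C,
    fun C hC => by simpa [hC] using (h C hC).choose_spec⟩

section
variable (hH : IsPartition H) (h𝒜L : IsFieldOver H 𝒜L) (hμ : IsFAP 𝒜L μ)
  (hM : ∀ i, |X i| ≤ M)
include hH h𝒜L hμ hM

theorem lowSum_le_of_refines (hT : IsFinPart 𝒜L T) (hR : IsFinPart 𝒜L R) (h : Refines R T) :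
    lowSum H X μ T ≤ lowSum H X μ R := by
  obtain ⟨p, hp⟩ := h.exists_parent
  rw [lowSum, sum_mul_eq_of_refines h𝒜L.1 hμ hT hR _ hp]
  refine Finset.sum_le_sum fun C hC => mul_le_mul_of_nonneg_right ?_ (hμ.nonneg (hR.1 hC))
  exact le_infOn (hH.exists_subset h𝒜L (hR.1 hC) (hR.2.1 C hC))
    fun i hi => infOn_le hM (hi.trans (hp C hC).2)

theorem upSum_le_of_refines (hT : IsFinPart 𝒜L T) (hR : IsFinPart 𝒜L R) (h : Refines R T) :
    upSum H X μ R ≤ upSum H X μ T := by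
  obtain ⟨p, hp⟩ := h.exists_parent
  rw [upSum, upSum, sum_mul_eq_of_refines h𝒜L.1 hμ hT hR _ hp]
  refine Finset.sum_le_sum fun C hC => mul_le_mul_of_nonneg_right ?_ (hμ.nonneg (hR.1 hC))
  exact supOn_le (hH.exists_subset h𝒜L (hR.1 hC) (hR.2.1 C hC))
    fun i hi => le_supOn hM (hi.trans (hp C hC).2)

theorem lowSum_le_upSum (hT : IsFinPart 𝒜L T) (hT' : IsFinPart 𝒜L T') :
    lowSum H X μ T ≤ upSum H X μ T' := by
  have hR := hT.commonRefinement h𝒜L.1 hT'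
  refine (lowSum_le_of_refines hH h𝒜L hμ hM hT hR refines_commonRefinement_left).trans <|
    le_trans ?_ (upSum_le_of_refines hH h𝒜L hμ hM hT' hR refines_commonRefinement_right)
  refine Finset.sum_le_sum fun C hC => mul_le_mul_of_nonneg_right ?_ (hμ.nonneg (hR.1 hC))
  obtain ⟨i, hi⟩ := hH.exists_subset h𝒜L (hR.1 hC) (hR.2.1 C hC)
  exact (infOn_le hM hi).trans (le_supOn hM hi)

variable [Nonempty Ω]

theorem lowSum_le_lowerSInt (hT : IsFinPart 𝒜L T) : lowSum H X μ T ≤ lowerSInt H 𝒜L X μ :=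
  le_csSup ⟨upSum H X μ {univ}, by
    rintro _ ⟨T, hT, rfl⟩; exact lowSum_le_upSum hH h𝒜L hμ hM hT (.univ h𝒜L.1)⟩ ⟨T, hT, rfl⟩

theorem lowerSInt_le_upSum (hT : IsFinPart 𝒜L T) : lowerSInt H 𝒜L X μ ≤ upSum H X μ T :=
  csSup_le ⟨_, _, .univ h𝒜L.1, rfl⟩ <| by
    rintro _ ⟨T', hT', rfl⟩; exact lowSum_le_upSum hH h𝒜L hμ hM hT' hT

theorem lowerSInt_eq_of_le_lowSum (hT : IsFinPart 𝒜L T) (hlow : c ≤ lowSum H X μ T)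
    (hup : upSum H X μ T ≤ c) : lowerSInt H 𝒜L X μ = c :=
  le_antisymm ((lowerSInt_le_upSum hH h𝒜L hμ hM hT).trans hup)
    (hlow.trans (lowSum_le_lowerSInt hH h𝒜L hμ hM hT))

end

end StieltjesSums

section Integrability

variable {H : ι → Set Ω} {𝒜L : Set (Set Ω)} {X Y : ι → ℝ} {μ : Set Ω → ℝ} {c : ℝ}

theorem exists_level_between {M δ a b : ℝ} (hδ : 0 < δ) (ha : -M ≤ a) (hb : b ≤ M)
    (hab : a + 2 * δ < b) :
    ∃ k < ⌈2 * M / δ⌉₊, a < -M + k * δ ∧ -M + k * δ + δ ≤ b := by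
  set x := (a + M) / δ
  have hx : 0 ≤ x := div_nonneg (by linarith) hδ.le
  have hxδ : x * δ = a + M := div_mul_cancel₀ _ hδ.ne'
  have hfl := Nat.floor_le hx
  have hlt := Nat.lt_floor_add_one x
  refine ⟨⌊x⌋₊ + 1, ?_, ?_, ?_⟩
  · have h2M : 2 * M / δ * δ = 2 * M := div_mul_cancel₀ _ hδ.ne'
    have : ((⌊x⌋₊ + 1 : ℕ) : ℝ) < ⌈2 * M / δ⌉₊ := by
      push_cast
      refine lt_of_lt_of_le ?_ (Nat.le_ceil _)
      nlinarith
    exact_mod_cast this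
  · push_cast; nlinarith
  · push_cast; nlinarith

theorem lt_add_of_subset_or_subset_compl (hH : IsPartition H) {t δ : ℝ} {g C : Set Ω}
    (hg : (⋃ i ∈ {i | t + δ ≤ X i}, H i) ⊆ g ∧ g ⊆ ⋃ i ∈ {i | t ≤ X i}, H i)
    (hC : C ⊆ g ∨ C ⊆ gᶜ) {i j : ι} (hi : H i ⊆ C) (hj : H j ⊆ C) (hXi : X i < t) :
    X j < t + δ := by
  by_contra! hXj
  have hjg : H j ⊆ g :=
    (subset_biUnion_of_mem (u := H) (show j ∈ {i | t + δ ≤ X i} from hXj)).trans hg.1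
  have hCg : C ⊆ g := hC.resolve_right fun h =>
    hH.not_subset_of_subset_compl (hj.trans h) hjg
  obtain ⟨ω, hω⟩ := hH.1 i
  obtain ⟨k, hk, hωk⟩ := mem_iUnion₂.1 (hg.2 (hCg (hi hω)))
  exact (hH.eq_of_mem hω hωk ▸ hk : t ≤ X i).not_gt hXi

variable (hH : IsPartition H) (h𝒜L : IsFieldOver H 𝒜L) (hμ : IsFAP 𝒜L μ)
include hH h𝒜L hμ

theorem lowSum_add_le {MX MY : ℝ} (hMX : ∀ i, |X i| ≤ MX) (hMY : ∀ i, |Y i| ≤ MY)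
    {T : Finset (Set Ω)} (hT : IsFinPart 𝒜L T) :
    lowSum H X μ T + lowSum H Y μ T ≤ lowSum H (X + Y) μ T := by
  rw [lowSum, lowSum, lowSum, ← Finset.sum_add_distrib]
  refine Finset.sum_le_sum fun C hC => ?_
  rw [← add_mul]
  refine mul_le_mul_of_nonneg_right ?_ (hμ.nonneg (hT.1 hC))
  exact le_infOn (hH.exists_subset h𝒜L (hT.1 hC) (hT.2.1 C hC)) fun i hi =>
    add_le_add (infOn_le hMX hi) (infOn_le hMY hi)

theorem upSum_add_le {MX MY : ℝ} (hMX : ∀ i, |X i| ≤ MX) (hMY : ∀ i, |Y i| ≤ MY)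
    {T : Finset (Set Ω)} (hT : IsFinPart 𝒜L T) :
    upSum H (X + Y) μ T ≤ upSum H X μ T + upSum H Y μ T := by
  rw [upSum, upSum, upSum, ← Finset.sum_add_distrib]
  refine Finset.sum_le_sum fun C hC => ?_
  rw [← add_mul]
  refine mul_le_mul_of_nonneg_right ?_ (hμ.nonneg (hT.1 hC))
  exact supOn_le (hH.exists_subset h𝒜L (hT.1 hC) (hT.2.1 C hC)) fun i hi =>
    add_le_add (le_supOn hMX hi) (le_supOn hMY hi)

variable [Nonempty Ω]

/-- Refine until the partition splits each set `g t` squeezed between `(X ≥ t + ε/2)` and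
`(X ≥ t)`, for the levels `t = -M + k ε/2` covering `[-M, M]`; then `X` oscillates by at most `ε`
on every cell. -/
theorem exists_upSum_le_lowSum_add (hX : ALContinuous H 𝒜L X) {ε : ℝ} (hε : 0 < ε) :
    ∃ T, IsFinPart 𝒜L T ∧ upSum H X μ T ≤ lowSum H X μ T + ε := by
  obtain ⟨M, hM⟩ := hX.1
  have hδ : 0 < ε / 2 := half_pos hε
  choose g hg𝒜 hg using fun t : ℝ => hX.2 t (ε / 2) hδ
  set level : ℕ → ℝ := fun k => -M + k * (ε / 2)
  obtain ⟨R, hR, -, hsplit⟩ := exists_finPart_refines_forall_pair h𝒜L.1 (.univ h𝒜L.1)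
    ((Finset.range ⌈2 * M / (ε / 2)⌉₊).image (g ∘ level)) (by simp [subset_def, hg𝒜])
  have hosc : ∀ C ∈ R, ∀ i j, H i ⊆ C → H j ⊆ C → X j ≤ X i + 2 * (ε / 2) := by
    intro C hC i j hi hj
    by_contra! hij
    obtain ⟨k, hk, hik, hkj⟩ := exists_level_between hδ (neg_le_of_abs_le (hM i))
      (le_of_abs_le (hM j)) hij
    have hCg := (hsplit (g (level k)) (Finset.mem_image_of_mem _ (Finset.mem_range.2 hk))
      ).subset_or_subset_compl hC
    exact (lt_add_of_subset_or_subset_compl hH (hg (level k)) hCg hi hj hik).not_ge hkj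
  refine ⟨R, hR, ?_⟩
  have hcell : ∀ C ∈ R, supOn H X C * μ C ≤ (infOn H X C + ε) * μ C := by
    intro C hC
    have hex := hH.exists_subset h𝒜L (hR.1 hC) (hR.2.1 C hC)
    refine mul_le_mul_of_nonneg_right ?_ (hμ.nonneg (hR.1 hC))
    refine supOn_le hex fun j hj => ?_
    have : X j - ε ≤ infOn H X C := le_infOn hex fun i hi => by linarith [hosc C hC i j hi hj]
    linarith
  calc upSum H X μ R ≤ ∑ C ∈ R, (infOn H X C + ε) * μ C := Finset.sum_le_sum hcell
    _ = lowSum H X μ R + ε := by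
      simp only [add_mul, Finset.sum_add_distrib, ← Finset.mul_sum, hR.sum_eq_one h𝒜L.1 hμ,
        mul_one, lowSum]

theorem lowerSInt_eq_of_forall (hX : ALContinuous H 𝒜L X)
    (h : ∀ T, IsFinPart 𝒜L T → lowSum H X μ T ≤ c ∧ c ≤ upSum H X μ T) :
    lowerSInt H 𝒜L X μ = c := by
  refine le_antisymm (csSup_le ⟨_, _, .univ h𝒜L.1, rfl⟩ ?_) (le_of_forall_pos_le_add fun ε hε => ?_)
  · rintro _ ⟨T, hT, rfl⟩
    exact (h T hT).1
  · obtain ⟨M, hM⟩ := hX.1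
    obtain ⟨T, hT, hTε⟩ := exists_upSum_le_lowSum_add hH h𝒜L hμ hX hε
    linarith [(h T hT).2, lowSum_le_lowerSInt hH h𝒜L hμ hM hT]

theorem lowerSInt_add (hX : ALContinuous H 𝒜L X) (hY : ALContinuous H 𝒜L Y) :
    lowerSInt H 𝒜L (X + Y) μ = lowerSInt H 𝒜L X μ + lowerSInt H 𝒜L Y μ := by
  obtain ⟨MX, hMX⟩ := hX.1
  obtain ⟨MY, hMY⟩ := hY.1
  have hMXY : ∀ i, |(X + Y) i| ≤ MX + MY := fun i =>
    (abs_add_le _ _).trans (add_le_add (hMX i) (hMY i))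
  refine eq_of_forall_dist_le fun ε hε => ?_
  obtain ⟨TX, hTX, hX'⟩ := exists_upSum_le_lowSum_add hH h𝒜L hμ hX (half_pos hε)
  obtain ⟨TY, hTY, hY'⟩ := exists_upSum_le_lowSum_add hH h𝒜L hμ hY (half_pos hε)
  set R := commonRefinement TX TY
  have hR := hTX.commonRefinement h𝒜L.1 hTY
  have hXR : upSum H X μ R ≤ lowSum H X μ R + ε / 2 := by
    linarith [lowSum_le_of_refines hH h𝒜L hμ hMX hTX hR refines_commonRefinement_left,
      upSum_le_of_refines hH h𝒜L hμ hMX hTX hR refines_commonRefinement_left]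
  have hYR : upSum H Y μ R ≤ lowSum H Y μ R + ε / 2 := by
    linarith [lowSum_le_of_refines hH h𝒜L hμ hMY hTY hR refines_commonRefinement_right,
      upSum_le_of_refines hH h𝒜L hμ hMY hTY hR refines_commonRefinement_right]
  have hlow := lowSum_add_le hH h𝒜L hμ hMX hMY hR
  have hup := upSum_add_le hH h𝒜L hμ hMX hMY hR
  rw [Real.dist_eq, abs_sub_le_iff]
  constructor <;>
  linarith [lowSum_le_lowerSInt hH h𝒜L hμ hMX hR, lowSum_le_lowerSInt hH h𝒜L hμ hMY hR,
    lowSum_le_lowerSInt hH h𝒜L hμ hMXY hR, lowerSInt_le_upSum hH h𝒜L hμ hMX hR,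
    lowerSInt_le_upSum hH h𝒜L hμ hMY hR, lowerSInt_le_upSum hH h𝒜L hμ hMXY hR]

end Integrability

section Computations

variable {H : ι → Set Ω} {𝒜L : Set (Set Ω)} {X Y : ι → ℝ} {μ : Set Ω → ℝ} {M a b c : ℝ}
  {B C K : Set Ω}

theorem lowerSInt_congr {μ' : Set Ω → ℝ} (h : ∀ B ∈ 𝒜L, μ B = μ' B) :
    lowerSInt H 𝒜L X μ = lowerSInt H 𝒜L X μ' := by
  have hsum : ∀ T, IsFinPart 𝒜L T → lowSum H X μ T = lowSum H X μ' T := fun T hT =>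
    Finset.sum_congr rfl fun A hA => by rw [h A (hT.1 hA)]
  simp only [lowerSInt_eq_sSup]
  congr 1
  ext x
  exact exists_congr fun T => and_congr_right fun hT => by rw [hsum T hT]

theorem infOn_congr (h : ∀ i, H i ⊆ C → X i = Y i) : infOn H X C = infOn H Y C := by
  unfold infOn
  congr 1
  ext y
  exact exists_congr fun i => and_congr_right fun hi => by rw [h i hi]

variable (hH : IsPartition H) (h𝒜L : IsFieldOver H 𝒜L) (hμ : IsFAP 𝒜L μ)
include hH h𝒜L hμ

theorem infOn_mul_eq (hC : C ∈ 𝒜L) (h : ∀ i, H i ⊆ C → X i = c) :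
    infOn H X C * μ C = c * μ C := by
  rcases C.eq_empty_or_nonempty with rfl | hne
  · simp [hμ.empty h𝒜L.1]
  · rw [infOn_eq (hH.exists_subset h𝒜L hC hne) h]

theorem supOn_mul_eq (hC : C ∈ 𝒜L) (h : ∀ i, H i ⊆ C → X i = c) :
    supOn H X C * μ C = c * μ C := by
  rcases C.eq_empty_or_nonempty with rfl | hne
  · simp [hμ.empty h𝒜L.1]
  · rw [supOn_eq (hH.exists_subset h𝒜L hC hne) h]

variable [Nonempty Ω]

omit hH in
theorem sum_pairPart (f : Set Ω → ℝ) :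
    ∑ A ∈ pairPart B, f A * μ A = f B * μ B + f Bᶜ * μ Bᶜ := by
  rw [pairPart, Finset.sum_filter_of_ne, Finset.sum_pair ne_compl_self]
  intro A _ hA
  by_contra hne
  rw [not_nonempty_iff_eq_empty.1 hne, hμ.empty h𝒜L.1, mul_zero] at hA
  exact hA rfl

theorem lowerSInt_eq_of_forall_subset (hB : B ∈ 𝒜L) (ha : ∀ i, H i ⊆ B → X i = a)
    (hb : ∀ i, ¬H i ⊆ B → X i = b) : lowerSInt H 𝒜L X μ = a * μ B + b * μ Bᶜ := by
  have hM : ∀ i, |X i| ≤ max |a| |b| := fun i => by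
    by_cases hi : H i ⊆ B
    · exact ha i hi ▸ le_max_left _ _
    · exact hb i hi ▸ le_max_right _ _
  have hb' : ∀ i, H i ⊆ Bᶜ → X i = b := fun i hi => hb i (hH.not_subset_of_subset_compl hi)
  have hBc := h𝒜L.1.isSetAlgebra.compl_mem hB
  refine lowerSInt_eq_of_le_lowSum hH h𝒜L hμ hM (isFinPart_pairPart h𝒜L.1 hB) ?_ ?_
  · rw [lowSum, sum_pairPart h𝒜L hμ, infOn_mul_eq hH h𝒜L hμ hB ha,
      infOn_mul_eq hH h𝒜L hμ hBc hb']
  · rw [upSum, sum_pairPart h𝒜L hμ, supOn_mul_eq hH h𝒜L hμ hB ha,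
      supOn_mul_eq hH h𝒜L hμ hBc hb']

theorem lowerSInt_eq_of_dirac (hM : ∀ i, |X i| ≤ M) (i₀ : ι)
    (hμ₀ : ∀ B ∈ 𝒜L, μ B = if H i₀ ⊆ B then 1 else 0) : lowerSInt H 𝒜L X μ = X i₀ := by
  have hi₀ := h𝒜L.2.1 i₀
  have h1 : μ (H i₀) = 1 := by simp [hμ₀ _ hi₀]
  have h0 : μ (H i₀)ᶜ = 0 := by
    obtain ⟨ω, hω⟩ := hH.1 i₀
    rw [hμ₀ _ (h𝒜L.1.isSetAlgebra.compl_mem hi₀), if_neg fun h => h hω hω]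
  have hc : ∀ i, H i ⊆ H i₀ → X i = X i₀ := fun i hi => by rw [hH.eq_of_subset hi]
  refine lowerSInt_eq_of_le_lowSum hH h𝒜L hμ hM (isFinPart_pairPart h𝒜L.1 hi₀) ?_ ?_
  · rw [lowSum, sum_pairPart h𝒜L hμ, infOn_eq ⟨i₀, subset_rfl⟩ hc, h1, h0]; simp
  · rw [upSum, sum_pairPart h𝒜L hμ, supOn_eq ⟨i₀, subset_rfl⟩ hc, h1, h0]; simp

theorem lowerSInt_mem_Icc (h : ∀ i, X i ∈ Icc 0 1) : lowerSInt H 𝒜L X μ ∈ Icc 0 1 := by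
  have hM : ∀ i, |X i| ≤ 1 := fun i => abs_le.2 ⟨by linarith [(h i).1], (h i).2⟩
  have hT := IsFinPart.univ h𝒜L.1 (Ω := Ω)
  refine ⟨le_trans ?_ (lowSum_le_lowerSInt hH h𝒜L hμ hM hT),
    (lowerSInt_le_upSum hH h𝒜L hμ hM hT).trans ?_⟩
  · simpa [lowSum, infOn, hμ.2.1] using
      Real.sInf_nonneg (by rintro _ ⟨i, -, rfl⟩; exact (h i).1)
  · simpa [upSum, supOn, hμ.2.1] using
      Real.sSup_le (by rintro _ ⟨i, -, rfl⟩; exact (h i).2) zero_le_one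

theorem lowerSInt_le_of_forall_refines (hM : ∀ i, |X i| ≤ M) (hK : K ∈ 𝒜L)
    (h : ∀ R, IsFinPart 𝒜L R → Refines R {K, Kᶜ} → lowSum H X μ R ≤ c) :
    lowerSInt H 𝒜L X μ ≤ c := by
  refine csSup_le ⟨_, _, .univ h𝒜L.1, rfl⟩ ?_
  rintro _ ⟨T, hT, rfl⟩
  have hR := hT.commonRefinement h𝒜L.1 (isFinPart_pairPart h𝒜L.1 hK)
  exact (lowSum_le_of_refines hH h𝒜L hμ hM hT hR refines_commonRefinement_left).trans
    (h _ hR (refines_commonRefinement_right.trans refines_pairPart))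

section Conditioning

variable (hK : K ∈ 𝒜L) (hμK : μ K ≠ 0) (hin : ∀ i, H i ⊆ K → Y i = X i)
  (hout : ∀ i, ¬H i ⊆ K → Y i = 0)
include hK hμK hin hout

omit [Nonempty Ω] hK in
theorem lowSum_eq_mul_lowSum_cond {R : Finset (Set Ω)} (hR : IsFinPart 𝒜L R)
    (hRK : Refines R {K, Kᶜ}) :
    lowSum H Y μ R = μ K * lowSum H X (fun B => μ (B ∩ K) / μ K) R := by
  rw [lowSum, lowSum, Finset.mul_sum]
  refine Finset.sum_congr rfl fun C hC => ?_
  rcases hRK.subset_or_subset_compl hC with hCK | hCK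
  · rw [inter_eq_left.2 hCK, infOn_congr fun i hi => hin i (hi.trans hCK)]
    field_simp
  · have hY0 : ∀ i, H i ⊆ C → Y i = 0 := fun i hi =>
      hout i (hH.not_subset_of_subset_compl (hi.trans hCK))
    have hCK0 : C ∩ K = ∅ := disjoint_iff_inter_eq_empty.1 (subset_compl_iff_disjoint_right.1 hCK)
    rw [infOn_mul_eq hH h𝒜L hμ (hR.1 hC) hY0, hCK0, hμ.empty h𝒜L.1]
    simp

theorem mul_lowerSInt_cond (hMX : ∀ i, |X i| ≤ M) (hMY : ∀ i, |Y i| ≤ M) :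
    μ K * lowerSInt H 𝒜L X (fun B => μ (B ∩ K) / μ K) = lowerSInt H 𝒜L Y μ := by
  have hKpos : 0 < μ K := (hμ.nonneg hK).lt_of_ne' hμK
  have hν := hμ.cond h𝒜L.1 hK hμK
  apply le_antisymm
  · rw [← le_div_iff₀' hKpos]
    refine lowerSInt_le_of_forall_refines hH h𝒜L hν hMX hK fun R hR hRK => ?_
    rw [le_div_iff₀' hKpos, ← lowSum_eq_mul_lowSum_cond hH h𝒜L hμ hμK hin hout hR hRK]
    exact lowSum_le_lowerSInt hH h𝒜L hμ hMY hR
  · refine lowerSInt_le_of_forall_refines hH h𝒜L hμ hMY hK fun R hR hRK => ?_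
    rw [lowSum_eq_mul_lowSum_cond hH h𝒜L hμ hμK hin hout hR hRK]
    exact mul_le_mul_of_nonneg_left (lowSum_le_lowerSInt hH h𝒜L hν hMX hR) hKpos.le

end Conditioning

end Computations

namespace IsStrategy

variable {𝒜 𝒜L : Set (Set Ω)} {H : ι → Set Ω} {σ : Set Ω → ι → ℝ} {F K : Set Ω} {i : ι}
  (hσ : IsStrategy 𝒜 H σ)
include hσ

theorem mem_Icc (hF : F ∈ 𝒜) (i : ι) : σ F i ∈ Icc 0 1 := (hσ i).1.1 F hF

theorem abs_le_one (hF : F ∈ 𝒜) (i : ι) : |σ F i| ≤ 1 :=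
  abs_le.2 ⟨by linarith [(hσ.mem_Icc hF i).1], (hσ.mem_Icc hF i).2⟩

variable (h𝒜 : IsSetField 𝒜) (hH : IsPartition H) (h𝒜L : IsFieldOver H 𝒜L) (hsub : 𝒜L ⊆ 𝒜)
include h𝒜 hH h𝒜L hsub

theorem inter_eq_zero (hF : F ∈ 𝒜) (hK : K ∈ 𝒜L) (hi : ¬H i ⊆ K) : σ (F ∩ K) i = 0 := by
  have hK𝒜 := hsub hK
  have hKc : σ Kᶜ i = 1 :=
    (hσ i).2 _ (h𝒜.isSetAlgebra.compl_mem hK𝒜) (hH.subset_compl_of_not_subset h𝒜L hK hi)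
  have hK0 : σ K i = 0 := by linarith [(hσ i).1.compl h𝒜 hK𝒜]
  exact (hσ i).1.eq_zero_of_subset h𝒜 (h𝒜.isSetAlgebra.inter_mem hF hK𝒜) hK𝒜
    inter_subset_right hK0

theorem inter_eq_self (hF : F ∈ 𝒜) (hK : K ∈ 𝒜L) (hi : H i ⊆ K) : σ (F ∩ K) i = σ F i := by
  have hKc := h𝒜L.1.isSetAlgebra.compl_mem hK
  have h0 := hσ.inter_eq_zero h𝒜 hH h𝒜L hsub hF hKc
    (hH.not_subset_of_subset_compl (compl_compl K ▸ hi))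
  have := (hσ i).1.union (h𝒜.isSetAlgebra.inter_mem hF (hsub hK))
    (h𝒜.isSetAlgebra.inter_mem hF (hsub hKc))
    ((disjoint_compl_right (a := K)).mono inter_subset_right inter_subset_right)
  rw [← inter_union_distrib_left, union_compl_self, inter_univ] at this
  linarith

theorem eq_ite (hK : K ∈ 𝒜L) (i : ι) : σ K i = if H i ⊆ K then 1 else 0 := by
  split_ifs with hi
  · exact (hσ i).2 K (hsub hK) hi
  · simpa using hσ.inter_eq_zero h𝒜 hH h𝒜L hsub h𝒜.1 hK hi

end IsStrategy

section Mixture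

variable {𝒜 𝒜L : Set (Set Ω)} {H : ι → Set Ω} {π : Set Ω → ℝ} {σ : Set Ω → ι → ℝ}
  {B F K : Set Ω}

/-- The joint probability `ν_π(F) = ∫ σ(F|H) π(dH)`. -/
noncomputable def mixture (H : ι → Set Ω) (𝒜L : Set (Set Ω)) (π : Set Ω → ℝ)
    (σ : Set Ω → ι → ℝ) (F : Set Ω) : ℝ :=
  lowerSInt H 𝒜L (fun i => σ F i) π

variable [Nonempty Ω] (hH : IsPartition H) (h𝒜L : IsFieldOver H 𝒜L) (hπ : IsFAP 𝒜L π)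
  (h𝒜 : IsSetField 𝒜) (hsub : 𝒜L ⊆ 𝒜) (hσ : IsStrategy 𝒜 H σ)
include hH h𝒜L hπ h𝒜 hsub hσ

theorem mixture_eq_prior (hB : B ∈ 𝒜L) : mixture H 𝒜L π σ B = π B := by
  rw [mixture, lowerSInt_eq_of_forall_subset hH h𝒜L hπ hB (a := 1) (b := 0), one_mul, zero_mul,
    add_zero]
  · exact fun i hi => by rw [hσ.eq_ite h𝒜 hH h𝒜L hsub hB, if_pos hi]
  · exact fun i hi => by rw [hσ.eq_ite h𝒜 hH h𝒜L hsub hB, if_neg hi]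

theorem mixture_inter_atom (hF : F ∈ 𝒜) (i : ι) :
    mixture H 𝒜L π σ (F ∩ H i) = σ F i * π (H i) := by
  rw [mixture, lowerSInt_eq_of_forall_subset hH h𝒜L hπ (h𝒜L.2.1 i) (a := σ F i) (b := 0),
    zero_mul, add_zero]
  · intro j hj
    rw [hH.eq_of_subset hj]
    exact hσ.inter_eq_self h𝒜 hH h𝒜L hsub hF (h𝒜L.2.1 i) subset_rfl
  · exact fun j hj => hσ.inter_eq_zero h𝒜 hH h𝒜L hsub hF (h𝒜L.2.1 i) hj

theorem isFAP_mixture (hcont : ∀ F ∈ 𝒜, ALContinuous H 𝒜L fun i => σ F i) :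
    IsFAP 𝒜 (mixture H 𝒜L π σ) := by
  refine ⟨fun F hF => lowerSInt_mem_Icc hH h𝒜L hπ (hσ.mem_Icc hF), ?_, fun F hF G hG hFG => ?_⟩
  · rw [mixture_eq_prior hH h𝒜L hπ h𝒜 hsub hσ h𝒜L.1.1]
    exact hπ.2.1
  · have : (fun i => σ (F ∪ G) i) = (fun i => σ F i) + fun i => σ G i :=
      funext fun i => (hσ i).1.union hF hG hFG
    rw [mixture, this, lowerSInt_add hH h𝒜L hπ (hcont F hF) (hcont G hG)]
    rfl

theorem mixture_inter_eq_mul (hF : F ∈ 𝒜) (hK : K ∈ 𝒜L) (hπK : π K ≠ 0) :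
    mixture H 𝒜L π σ (F ∩ K) =
      π K * lowerSInt H 𝒜L (fun i => σ F i) fun B => π (B ∩ K) / π K :=
  (mul_lowerSInt_cond hH h𝒜L hπ hK hπK
    (fun _ hi => hσ.inter_eq_self h𝒜 hH h𝒜L hsub hF hK hi)
    (fun _ hi => hσ.inter_eq_zero h𝒜 hH h𝒜L hsub hF hK hi) (hσ.abs_le_one hF)
    (hσ.abs_le_one (h𝒜.isSetAlgebra.inter_mem hF (hsub hK)))).symm

end Mixture

section Lexicographic

variable {α : Type*} (r : α → α → Prop) [IsWellOrder α r] [Nonempty α]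
  (μ : α → Set Ω → ℝ)

/-- When no member of `μ` charges `K` the index is arbitrary, and `lexCond · K` vanishes by
division by zero. -/
noncomputable def lexIndex (K : Set Ω) : α :=
  if h : ∃ a, μ a K ≠ 0 then (IsWellFounded.wf : WellFounded r).min {a | μ a K ≠ 0} h
  else Classical.arbitrary α

noncomputable def lexCond (F K : Set Ω) : ℝ :=
  μ (lexIndex r μ K) (F ∩ K) / μ (lexIndex r μ K) K

variable {r μ} {K E : Set Ω} {a : α}

theorem lexIndex_ne_zero (h : ∃ a, μ a K ≠ 0) : μ (lexIndex r μ K) K ≠ 0 := by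
  rw [lexIndex, dif_pos h]
  exact WellFounded.min_mem _ {a | μ a K ≠ 0} h

theorem not_rel_lexIndex (ha : μ a K ≠ 0) : ¬r a (lexIndex r μ K) := by
  rw [lexIndex, dif_pos ⟨a, ha⟩]
  exact WellFounded.not_lt_min _ {a | μ a K ≠ 0} ha

theorem lexIndex_eq (ha : μ a K ≠ 0) (hmin : ∀ b, r b a → μ b K = 0) : lexIndex r μ K = a := by
  rcases trichotomous_of r (lexIndex r μ K) a with h | h | h
  · exact absurd (hmin _ h) (lexIndex_ne_zero ⟨a, ha⟩)
  · exact h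
  · exact absurd h (not_rel_lexIndex ha)

theorem lexIndex_eq_of_charges (hEK : ∀ b, μ b E ≠ 0 → μ b K ≠ 0)
    (hE : μ (lexIndex r μ K) E ≠ 0) : lexIndex r μ E = lexIndex r μ K :=
  lexIndex_eq hE fun b hb => by_contra fun h => not_rel_lexIndex (hEK b h) hb

theorem isFCP_lexCond {𝒜 : Set (Set Ω)} (h𝒜 : IsSetField 𝒜) (hμ : ∀ a, IsFAP 𝒜 (μ a))
    (hcharge : ∀ K ∈ 𝒜, K.Nonempty → ∃ a, μ a K ≠ 0) : IsFCP 𝒜 (lexCond r μ) := by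
  refine ⟨fun E _ K _ _ => by simp [lexCond, inter_assoc],
    fun K hK hne => (hμ _).cond h𝒜 hK (lexIndex_ne_zero (hcharge K hK hne)),
    fun E hE F hF K hK hne hEKne => ?_⟩
  have hEK := h𝒜.isSetAlgebra.inter_mem hE hK
  have hmono : ∀ {b G}, G ∈ 𝒜 → G ⊆ E ∩ K → μ b (E ∩ K) = 0 → μ b G = 0 := fun hG hGEK =>
    (hμ _).eq_zero_of_subset h𝒜 hG hEK hGEK
  have hset : E ∩ F ∩ K = F ∩ (E ∩ K) := by rw [inter_right_comm, inter_comm]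
  simp only [lexCond]
  set b := lexIndex r μ K
  by_cases h0 : μ b (E ∩ K) = 0
  · rw [h0, zero_div, zero_mul,
      hmono (h𝒜.isSetAlgebra.inter_mem (h𝒜.isSetAlgebra.inter_mem hE hF) hK)
        (hset ▸ inter_subset_right) h0, zero_div]
  · have hidx : lexIndex r μ (E ∩ K) = b := lexIndex_eq_of_charges (fun c hc h => hc <|
      (hμ c).eq_zero_of_subset h𝒜 hEK hK inter_subset_right h) h0
    rw [hidx, hset]
    have hb : μ b K ≠ 0 := lexIndex_ne_zero (hcharge K hK hne)
    field_simp

end Lexicographic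

section Witness

variable {𝒜 𝒜L : Set (Set Ω)} {H : ι → Set Ω} {π : Set Ω → ℝ} {σ : Set Ω → ι → ℝ}
  {B F K : Set Ω}

/-- First the mixture, then the `σ(·|H i)` along a well-order of `ι`, then the Dirac masses
along a well-order of `Ω`. -/
abbrev witnessOrder (α β : Type*) : Unit ⊕ α ⊕ β → Unit ⊕ α ⊕ β → Prop :=
  Sum.Lex emptyRelation (Sum.Lex WellOrderingRel WellOrderingRel)

noncomputable def witnessFamily (H : ι → Set Ω) (𝒜L : Set (Set Ω)) (π : Set Ω → ℝ)
    (σ : Set Ω → ι → ℝ) : Unit ⊕ ι ⊕ Ω → Set Ω → ℝ :=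
  Sum.elim (fun _ => mixture H 𝒜L π σ)
    (Sum.elim (fun i F => σ F i) fun ω F => if ω ∈ F then 1 else 0)

noncomputable def witness (H : ι → Set Ω) (𝒜L : Set (Set Ω)) (π : Set Ω → ℝ)
    (σ : Set Ω → ι → ℝ) : Set Ω → Set Ω → ℝ :=
  lexCond (witnessOrder ι Ω) (witnessFamily H 𝒜L π σ)

theorem witness_eq_of_mixture_ne_zero (h : mixture H 𝒜L π σ K ≠ 0) (F : Set Ω) :
    witness H 𝒜L π σ F K = mixture H 𝒜L π σ (F ∩ K) / mixture H 𝒜L π σ K := by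
  have : lexIndex (witnessOrder ι Ω) (witnessFamily H 𝒜L π σ) K = .inl () :=
    lexIndex_eq h fun b hb => by cases hb with | inl h => exact h.elim
  rw [witness, lexCond, this]
  rfl

theorem witness_eq_of_mixture_eq_zero (h : mixture H 𝒜L π σ K = 0) {i : ι} (hi : σ K i ≠ 0)
    (hmin : ∀ j, WellOrderingRel j i → σ K j = 0) (F : Set Ω) :
    witness H 𝒜L π σ F K = σ (F ∩ K) i / σ K i := by
  have : lexIndex (witnessOrder ι Ω) (witnessFamily H 𝒜L π σ) K = .inr (.inl i) := by
    refine lexIndex_eq hi fun b hb => ?_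
    rcases b with _ | j | ω
    · exact h
    · exact hmin j (by simpa using hb)
    · simp at hb
  rw [witness, lexCond, this]
  rfl

variable [Nonempty Ω] (hH : IsPartition H) (h𝒜L : IsFieldOver H 𝒜L) (hπ : IsFAP 𝒜L π)
  (h𝒜 : IsSetField 𝒜) (hsub : 𝒜L ⊆ 𝒜) (hσ : IsStrategy 𝒜 H σ)
include hH h𝒜L hπ h𝒜 hsub hσ

theorem witness_univ (hB : B ∈ 𝒜L) : witness H 𝒜L π σ B univ = π B := by
  have h1 : mixture H 𝒜L π σ univ = 1 := by
    rw [mixture_eq_prior hH h𝒜L hπ h𝒜 hsub hσ h𝒜L.1.1, hπ.2.1]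
  rw [witness_eq_of_mixture_ne_zero (h1 ▸ one_ne_zero), h1, inter_univ, div_one,
    mixture_eq_prior hH h𝒜L hπ h𝒜 hsub hσ hB]

theorem witness_atom (hF : F ∈ 𝒜) (i : ι) : witness H 𝒜L π σ F (H i) = σ F i := by
  have hi := h𝒜L.2.1 i
  by_cases h : mixture H 𝒜L π σ (H i) = 0
  · have hσi : σ (H i) i = 1 := (hσ i).2 _ (hsub hi) subset_rfl
    rw [witness_eq_of_mixture_eq_zero h (hσi ▸ one_ne_zero) fun j hj => ?_, hσi, div_one,
      hσ.inter_eq_self h𝒜 hH h𝒜L hsub hF hi subset_rfl]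
    rw [hσ.eq_ite h𝒜 hH h𝒜L hsub hi, if_neg fun hji => ?_]
    exact irrefl_of WellOrderingRel i (hH.eq_of_subset hji ▸ hj)
  · rw [mixture_eq_prior hH h𝒜L hπ h𝒜 hsub hσ hi] at h
    rw [witness_eq_of_mixture_ne_zero (by rwa [mixture_eq_prior hH h𝒜L hπ h𝒜 hsub hσ hi]),
      mixture_inter_atom hH h𝒜L hπ h𝒜 hsub hσ hF, mixture_eq_prior hH h𝒜L hπ h𝒜 hsub hσ hi,
      mul_div_cancel_right₀ _ h]

variable (hcont : ∀ F ∈ 𝒜, ALContinuous H 𝒜L fun i => σ F i)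
include hcont

theorem isFCP_witness : IsFCP 𝒜 (witness H 𝒜L π σ) := by
  refine isFCP_lexCond h𝒜 ?_ fun K _ ⟨ω, hω⟩ => ⟨.inr (.inr ω), by simp [witnessFamily, hω]⟩
  rintro (_ | i | ω)
  · exact isFAP_mixture hH h𝒜L hπ h𝒜 hsub hσ hcont
  · exact (hσ i).1
  · exact isFAP_dirac 𝒜 ω

theorem witness_eq_lowerSInt (hF : F ∈ 𝒜) (hK : K ∈ 𝒜L) (hne : K.Nonempty) :
    witness H 𝒜L π σ F K =
      lowerSInt H 𝒜L (fun i => σ F i) fun B => witness H 𝒜L π σ B K := by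
  have hmixK := mixture_eq_prior hH h𝒜L hπ h𝒜 hsub hσ hK
  by_cases hπK : π K = 0
  · obtain ⟨i₀, hi₀K, hmin⟩ := (IsWellFounded.wf : WellFounded WellOrderingRel).has_min
      {i | H i ⊆ K} (hH.exists_subset h𝒜L hK hne)
    have hσK : σ K i₀ = 1 := (hσ i₀).2 K (hsub hK) hi₀K
    have hw : ∀ G ∈ 𝒜, witness H 𝒜L π σ G K = σ G i₀ := fun G hG => by
      rw [witness_eq_of_mixture_eq_zero (hmixK.trans hπK) (hσK ▸ one_ne_zero) fun j hj => ?_,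
        hσK, div_one, hσ.inter_eq_self h𝒜 hH h𝒜L hsub hG hK hi₀K]
      rw [hσ.eq_ite h𝒜 hH h𝒜L hsub hK, if_neg fun hjK : H j ⊆ K => hmin j hjK hj]
    have hμ : IsFAP 𝒜L fun B => witness H 𝒜L π σ B K :=
      ((isFCP_witness hH h𝒜L hπ h𝒜 hsub hσ hcont).2.1 K (hsub hK) hne).of_subset hsub
    rw [hw F hF, lowerSInt_eq_of_dirac hH h𝒜L hμ (hσ.abs_le_one hF) i₀ fun B hB => by
      rw [hw B (hsub hB), hσ.eq_ite h𝒜 hH h𝒜L hsub hB]]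
  · rw [witness_eq_of_mixture_ne_zero (hmixK ▸ hπK),
      mixture_inter_eq_mul hH h𝒜L hπ h𝒜 hsub hσ hF hK hπK, hmixK, mul_div_cancel_left₀ _ hπK]
    refine lowerSInt_congr fun B hB => ?_
    rw [witness_eq_of_mixture_ne_zero (hmixK ▸ hπK), hmixK,
      mixture_eq_prior hH h𝒜L hπ h𝒜 hsub hσ (h𝒜L.1.isSetAlgebra.inter_mem hB hK)]

theorem witness_mem_QfdSet : witness H 𝒜L π σ ∈ QfdSet 𝒜 𝒜L H π σ :=
  ⟨isFCP_witness hH h𝒜L hπ h𝒜 hsub hσ hcont,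
    ⟨fun _ hB => witness_univ hH h𝒜L hπ h𝒜 hsub hσ hB,
      fun _ hF i => witness_atom hH h𝒜L hπ h𝒜 hsub hσ hF i⟩,
    fun _ hF _ hK hne => witness_eq_lowerSInt hH h𝒜L hπ h𝒜 hsub hσ hcont hF hK hne⟩

end Witness

section Compactness

variable {𝒜 𝒜L : Set (Set Ω)} {H : ι → Set Ω} {π : Set Ω → ℝ} {σ : Set Ω → ι → ℝ}

def sandwichSet (𝒜 𝒜L : Set (Set Ω)) (H : ι → Set Ω) (π : Set Ω → ℝ) (σ : Set Ω → ι → ℝ) :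
    Set (Set Ω → Set Ω → ℝ) :=
  {Q | Q ∈ FCPSet 𝒜 𝒜L H π σ ∧ ∀ F ∈ 𝒜, ∀ K ∈ 𝒜L, K.Nonempty → ∀ T, IsFinPart 𝒜L T →
    lowSum H (fun i => σ F i) (fun B => Q B K) T ≤ Q F K ∧
      Q F K ≤ upSum H (fun i => σ F i) (fun B => Q B K) T}

theorem isClosed_sandwichSet : IsClosed (sandwichSet 𝒜 𝒜L H π σ) := by
  simp only [sandwichSet, FCPSet, IsFCP, IsFAP, ExtendsPriorStrategy, lowSum, upSum, ofPred_and,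
    ofPred_forall, ofPred_mem_eq]
  repeat' first
    | intro _
    | apply IsClosed.inter
    | apply isClosed_iInter
    | apply isClosed_eq
    | apply isClosed_le
  all_goals fun_prop

noncomputable def extendPairs (𝒜 : Set (Set Ω))
    (p : {q : Set Ω × Set Ω // q.1 ∈ 𝒜 ∧ q.2 ∈ 𝒜 ∧ q.2.Nonempty} → ℝ) (F K : Set Ω) : ℝ :=
  if h : F ∈ 𝒜 ∧ K ∈ 𝒜 ∧ K.Nonempty then p ⟨(F, K), h⟩ else 0

theorem restrictPairs_extendPairs
    (p : {q : Set Ω × Set Ω // q.1 ∈ 𝒜 ∧ q.2 ∈ 𝒜 ∧ q.2.Nonempty} → ℝ) :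
    restrictPairs 𝒜 𝒜 (extendPairs 𝒜 p) = p :=
  funext fun q => dif_pos q.2

theorem extendPairs_restrictPairs (Q : Set Ω → Set Ω → ℝ) {F K : Set Ω}
    (h : F ∈ 𝒜 ∧ K ∈ 𝒜 ∧ K.Nonempty) : extendPairs 𝒜 (restrictPairs 𝒜 𝒜 Q) F K = Q F K :=
  dif_pos h

theorem continuous_extendPairs : Continuous (extendPairs (Ω := Ω) 𝒜) :=
  continuous_pi fun F => continuous_pi fun K => by
    by_cases h : F ∈ 𝒜 ∧ K ∈ 𝒜 ∧ K.Nonempty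
    · simpa [extendPairs, h] using continuous_apply _
    · simpa [extendPairs, h] using continuous_const

variable [Nonempty Ω]

theorem mem_QfdSet_of_eqOn (hH : IsPartition H) (h𝒜L : IsFieldOver H 𝒜L) (h𝒜 : IsSetField 𝒜)
    (hsub : 𝒜L ⊆ 𝒜) {Q Q' : Set Ω → Set Ω → ℝ} (hQ : Q ∈ QfdSet 𝒜 𝒜L H π σ)
    (h : ∀ F ∈ 𝒜, ∀ K ∈ 𝒜, K.Nonempty → Q' F K = Q F K) : Q' ∈ QfdSet 𝒜 𝒜L H π σ := by
  obtain ⟨⟨hC1, hC2, hC3⟩, ⟨hprior, hstrat⟩, hdis⟩ := hQ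
  have hinter := fun {E K} (hE : E ∈ 𝒜) (hK : K ∈ 𝒜) => h𝒜.isSetAlgebra.inter_mem hE hK
  refine ⟨⟨fun E hE K hK hne => ?_, fun K hK hne => ?_, fun E hE F hF K hK hne hEK => ?_⟩,
    ⟨fun B hB => ?_, fun F hF i => ?_⟩, fun F hF K hK hne => ?_⟩
  · rw [h E hE K hK hne, h _ (hinter hE hK) K hK hne]
    exact hC1 E hE K hK hne
  · exact (hC2 K hK hne).congr (fun E hE => h E hE K hK hne) h𝒜.1 h𝒜.2.2
  · rw [h _ (hinter hE hF) K hK hne, h E hE K hK hne, h F hF _ (hinter hE hK) hEK]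
    exact hC3 E hE F hF K hK hne hEK
  · rw [h B (hsub hB) _ h𝒜.1 univ_nonempty]
    exact hprior B hB
  · rw [h F hF _ (hsub (h𝒜L.2.1 i)) (hH.1 i)]
    exact hstrat F hF i
  · rw [h F hF K (hsub hK) hne, lowerSInt_congr fun B hB => h B (hsub hB) K (hsub hK) hne]
    exact hdis F hF K hK hne

theorem image_restrictPairs_QfdSet (hH : IsPartition H) (h𝒜L : IsFieldOver H 𝒜L)
    (h𝒜 : IsSetField 𝒜) (hsub : 𝒜L ⊆ 𝒜) :
    restrictPairs 𝒜 𝒜 '' QfdSet 𝒜 𝒜L H π σ = extendPairs 𝒜 ⁻¹' QfdSet 𝒜 𝒜L H π σ := by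
  ext p
  refine ⟨?_, fun hp => ⟨_, hp, restrictPairs_extendPairs p⟩⟩
  rintro ⟨Q, hQ, rfl⟩
  exact mem_QfdSet_of_eqOn hH h𝒜L h𝒜 hsub hQ fun F hF K hK hne =>
    extendPairs_restrictPairs Q ⟨hF, hK, hne⟩

theorem QfdSet_eq_sandwichSet (hH : IsPartition H) (h𝒜L : IsFieldOver H 𝒜L) (hsub : 𝒜L ⊆ 𝒜)
    (hσ : IsStrategy 𝒜 H σ) (hcont : ∀ F ∈ 𝒜, ALContinuous H 𝒜L fun i => σ F i) :
    QfdSet 𝒜 𝒜L H π σ = sandwichSet 𝒜 𝒜L H π σ := by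
  ext Q
  refine ⟨fun ⟨hQ, hext, hdis⟩ => ⟨⟨hQ, hext⟩, fun F hF K hK hne T hT => ?_⟩,
    fun ⟨⟨hQ, hext⟩, hsand⟩ => ⟨hQ, hext, fun F hF K hK hne => ?_⟩⟩
  · have hμ := (hQ.2.1 K (hsub hK) hne).of_subset hsub
    rw [hdis F hF K hK hne]
    exact ⟨lowSum_le_lowerSInt hH h𝒜L hμ (hσ.abs_le_one hF) hT,
      lowerSInt_le_upSum hH h𝒜L hμ (hσ.abs_le_one hF) hT⟩
  · exact (lowerSInt_eq_of_forall hH h𝒜L ((hQ.2.1 K (hsub hK) hne).of_subset hsub)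
      (hcont F hF) (hsand F hF K hK hne)).symm

theorem isCompact_image_restrictPairs_QfdSet (hH : IsPartition H) (h𝒜L : IsFieldOver H 𝒜L)
    (h𝒜 : IsSetField 𝒜) (hsub : 𝒜L ⊆ 𝒜) (hσ : IsStrategy 𝒜 H σ)
    (hcont : ∀ F ∈ 𝒜, ALContinuous H 𝒜L fun i => σ F i) :
    IsCompact (restrictPairs 𝒜 𝒜 '' QfdSet 𝒜 𝒜L H π σ) := by
  refine (isCompact_univ_pi fun _ => isCompact_Icc (a := (0 : ℝ)) (b := 1)).of_isClosed_subset
    ?_ ?_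
  · rw [image_restrictPairs_QfdSet hH h𝒜L h𝒜 hsub, QfdSet_eq_sandwichSet hH h𝒜L hsub hσ hcont]
    exact isClosed_sandwichSet.preimage continuous_extendPairs
  · rintro _ ⟨Q, hQ, rfl⟩ ⟨⟨F, K⟩, hF, hK, hne⟩ -
    exact (hQ.1.2.1 K hK hne).1 F hF

end Compactness

end

theorem statement6_general {Ω ι κ : Type*} [Nonempty Ω] (H : ι → Set Ω) (E : κ → Set Ω)
    (𝒜L 𝒜E 𝒜 : Set (Set Ω))
    (hH : IsPartition H)
    (h𝒜L : IsFieldOver H 𝒜L)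
    (h𝒜 : IsJointField H E 𝒜L 𝒜E 𝒜)
    (π : Set Ω → ℝ) (hπ : IsFAP 𝒜L π)
    (σ : Set Ω → ι → ℝ) (hσ : IsStrategy 𝒜 H σ)
    (hcont : ∀ F ∈ 𝒜, ALContinuous H 𝒜L fun i => σ F i) :
    (restrictPairs 𝒜 𝒜 '' QfdSet 𝒜 𝒜L H π σ).Nonempty ∧
    IsCompact (restrictPairs 𝒜 𝒜 '' QfdSet 𝒜 𝒜L H π σ) :=
  ⟨.image _ ⟨_, witness_mem_QfdSet hH h𝒜L hπ h𝒜.1 h𝒜.2.1 hσ hcont⟩,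
    isCompact_image_restrictPairs_QfdSet hH h𝒜L h𝒜.1 h𝒜.2.1 hσ hcont⟩

/-- `𝒬^fd` is a nonempty compact subset of `[0,1]^(𝒜 × 𝒜⁰)` with the
product topology of pointwise convergence. -/
theorem statement6 {Ω ι κ : Type*} [Nonempty Ω] (H : ι → Set Ω) (E : κ → Set Ω)
    (𝒜L 𝒜E 𝒜 : Set (Set Ω))
    (hH : IsPartition H) (hE : IsPartition E)
    (h𝒜L : IsFieldOver H 𝒜L) (h𝒜E : IsFieldOver E 𝒜E)
    (h𝒜 : IsJointField H E 𝒜L 𝒜E 𝒜)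
    (π : Set Ω → ℝ) (hπ : IsFAP 𝒜L π)
    (σ : Set Ω → ι → ℝ) (hσ : IsStrategy 𝒜 H σ)
    (hcont : ∀ F ∈ 𝒜, ALContinuous H 𝒜L fun i => σ F i) :
    (restrictPairs 𝒜 𝒜 '' QfdSet 𝒜 𝒜L H π σ).Nonempty ∧
    IsCompact (restrictPairs 𝒜 𝒜 '' QfdSet 𝒜 𝒜L H π σ) :=
  statement6_general H E 𝒜L 𝒜E 𝒜 hH h𝒜L h𝒜 π hπ σ hσ hcont
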